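/- Suppose buyer 1 is a strict monopsonist at a decision node x, i.e. f_1(x) = t. Then for every real number k ∈ (0, t], μ_1(x) ≥ ∫_0^k v̄_1(τ|x) dτ − k·v̄_2(t − k | x). -/

import Mathlib

open Finset

noncomputable section

/-- The opponent of buyer `i`. -/
def other (i : Fin 2) : Fin 2 := 1 - i

/-- The standard unit vector of buyer `i`: winning one item moves `x` to `x + e i`. -/
def e (i : Fin 2) : Fin 2 → ℕ := Pi.single i 1

/-- Remaining supply `t(x) = T - x₁ - x₂` at node `x`. -/
def supply (T : ℕ) (x : Fin 2 → ℕ) : ℕ := T - (x 0 + x 1)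

/-- `x` is a decision node: `x₁ + x₂ < T`. -/
def IsDecision (T : ℕ) (x : Fin 2 → ℕ) : Prop := x 0 + x 1 < T

/-- Incremental value `v_i(k|x) = v_i(x_i + k)`. -/
def val (v : Fin 2 → ℕ → ℝ) (i : Fin 2) (k : ℕ) (x : Fin 2 → ℕ) : ℝ := v i (x i + k)

/-- Valuations are nonnegative and weakly decreasing. -/
def Admissible (v : Fin 2 → ℕ → ℝ) : Prop := ∀ i k, 0 ≤ v i k ∧ v i (k + 1) ≤ v i k

/-- Greedy payoff `μ̄_i(k|x) = Σ_{j=1}^k v_i(j|x) - k · v_{-i}(t-k+1|x)`. -/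
def gbar (T : ℕ) (v : Fin 2 → ℕ → ℝ) (i : Fin 2) (k : ℕ) (x : Fin 2 → ℕ) : ℝ :=
  (∑ j ∈ Finset.Icc 1 k, val v i j x) - (k : ℝ) * val v (other i) (supply T x - k + 1) x

/-- Greedy utility `μ_i(x) = max_{0 ≤ k ≤ t} μ̄_i(k|x)` (equal to `0` at terminal nodes). -/
def gu (T : ℕ) (v : Fin 2 → ℕ → ℝ) (i : Fin 2) (x : Fin 2 → ℕ) : ℝ :=
  Finset.sup' (Finset.range (supply T x + 1)) Finset.nonempty_range_add_one
    (fun k => gbar T v i k x)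

/-- Greedy demand `κ_i(x)`: the least `k ∈ {0,…,t}` attaining the greedy utility. -/
def gd (T : ℕ) (v : Fin 2 → ℕ → ℝ) (i : Fin 2) (x : Fin 2 → ℕ) : ℕ :=
  sInf {k | k ≤ supply T x ∧ gbar T v i k x = gu T v i x}

/-- Duopsony factor `f_i(x) = max ({k ∈ {1,…,t} : v_i(k|x) > v_{-i}(t-k+1|x)} ∪ {0})`. -/
def df (T : ℕ) (v : Fin 2 → ℕ → ℝ) (i : Fin 2) (x : Fin 2 → ℕ) : ℕ :=
  sSup {k | 1 ≤ k ∧ k ≤ supply T x ∧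
    val v (other i) (supply T x - k + 1) x < val v i k x}

/-- Baseline price `β_i(x)`. -/
def base (T : ℕ) (v : Fin 2 → ℕ → ℝ) (i : Fin 2) (x : Fin 2 → ℕ) : ℝ :=
  if df T v i x = 0 then val v i 1 x
  else val v (other i) (supply T x - gd T v i x + 1) x

/-- Threshold price `p_i(x) = v_i(1|x) + μ_i(x+e_i) - μ_i(x+e_{-i})`. -/
def tp (T : ℕ) (v : Fin 2 → ℕ → ℝ) (i : Fin 2) (x : Fin 2 → ℕ) : ℝ :=
  val v i 1 x + gu T v i (x + e i) - gu T v i (x + e (other i))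

/-- Real extension of buyer 1's incremental valuation at `x`: `v̄₁(τ|x) = v₁(⌈τ⌉|x)`. -/
def rv1 (v : Fin 2 → ℕ → ℝ) (x : Fin 2 → ℕ) (τ : ℝ) : ℝ := v 0 (x 0 + ⌈τ⌉₊)

/-- Real extension of buyer 2's incremental valuation at `x`: `v̄₂(τ|x) = v₂(⌊τ⌋+1|x)`. -/
def rv2 (v : Fin 2 → ℕ → ℝ) (x : Fin 2 → ℕ) (τ : ℝ) : ℝ := v 1 (x 1 + ⌊τ⌋₊ + 1)

lemma Admissible.antitone {v : Fin 2 → ℕ → ℝ} (hv : Admissible v) (i : Fin 2) :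
    Antitone (v i) :=
  antitone_nat_of_succ_le fun k => (hv i k).2

lemma Admissible.antitone_rv1 {v : Fin 2 → ℕ → ℝ} (hv : Admissible v) (x : Fin 2 → ℕ) :
    Antitone (rv1 v x) := fun _ _ hab =>
  hv.antitone 0 (Nat.add_le_add_left (Nat.ceil_mono hab) _)

lemma integral_rv1_of_le_of_le (v : Fin 2 → ℕ → ℝ) (x : Fin 2 → ℕ) (j : ℕ) {a b : ℝ}
    (ha : (j : ℝ) ≤ a) (hab : a ≤ b) (hb : b ≤ j + 1) :
    ∫ τ in a..b, rv1 v x τ = (b - a) * val v 0 (j + 1) x := by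
  have hconst : ∀ τ ∈ Set.uIoc a b, rv1 v x τ = val v 0 (j + 1) x := by
    intro τ hτ
    rw [Set.uIoc_of_le hab] at hτ
    have hceil : ⌈τ⌉₊ = j + 1 := by
      rw [Nat.ceil_eq_iff (Nat.succ_ne_zero j), Nat.succ_sub_one, Nat.cast_succ]
      exact ⟨ha.trans_lt hτ.1, hτ.2.trans hb⟩
    rw [rv1, hceil, _root_.val]
  rw [intervalIntegral.integral_congr_ae (Filter.Eventually.of_forall hconst),
    intervalIntegral.integral_const, smul_eq_mul]

lemma integral_rv1_natCast {v : Fin 2 → ℕ → ℝ} (hv : Admissible v) (x : Fin 2 → ℕ) (m : ℕ) :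
    ∫ τ in (0 : ℝ)..m, rv1 v x τ = ∑ j ∈ Icc 1 m, val v 0 j x := by
  induction m with
  | zero => simp
  | succ m ih =>
    rw [Nat.cast_add_one, ← intervalIntegral.integral_add_adjacent_intervals
      (hv.antitone_rv1 x).intervalIntegrable (hv.antitone_rv1 x).intervalIntegrable, ih,
      integral_rv1_of_le_of_le v x m le_rfl (by linarith) le_rfl,
      sum_Icc_succ_top (Nat.le_add_left 1 m)]
    ring

lemma integral_rv1_of_lt_of_le {v : Fin 2 → ℕ → ℝ} (hv : Admissible v) (x : Fin 2 → ℕ)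
    {m : ℕ} {k : ℝ} (hmk : (m : ℝ) < k) (hkm : k ≤ m + 1) :
    ∫ τ in (0 : ℝ)..k, rv1 v x τ = ∑ j ∈ Icc 1 m, val v 0 j x + (k - m) * val v 0 (m + 1) x := by
  rw [← intervalIntegral.integral_add_adjacent_intervals (b := m)
      (hv.antitone_rv1 x).intervalIntegrable (hv.antitone_rv1 x).intervalIntegrable,
    integral_rv1_natCast hv, integral_rv1_of_le_of_le v x m le_rfl hmk.le hkm]

lemma rv2_sub_of_lt_of_le (v : Fin 2 → ℕ → ℝ) (x : Fin 2 → ℕ) {t m : ℕ} {k : ℝ}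
    (hmt : m + 1 ≤ t) (hmk : (m : ℝ) < k) (hkm : k ≤ m + 1) :
    rv2 v x (t - k) = val v 1 (t - m) x := by
  have hfloor : ⌊(t : ℝ) - k⌋₊ = t - (m + 1) := by
    have hmt' : (m : ℝ) + 1 ≤ t := by exact_mod_cast hmt
    rw [Nat.floor_eq_iff (by linarith), Nat.cast_sub hmt]
    push_cast
    constructor <;> linarith
  rw [rv2, hfloor, _root_.val]
  congr 1
  omega

lemma gbar_le_gu (T : ℕ) (v : Fin 2 → ℕ → ℝ) (i : Fin 2) (x : Fin 2 → ℕ) {j : ℕ}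
    (hj : j ≤ supply T x) : gbar T v i j x ≤ gu T v i x :=
  le_sup' (fun j => gbar T v i j x) (mem_range.2 (Nat.lt_succ_of_le hj))

/-- The left side is the `θ`-convex combination of `μ̄₁(m+1)` and of `μ̄₁(m)` with its price
`v₂(t-m+1)` raised to `v₂(t-m)`. -/
lemma interpolated_payoff_le_gu {v : Fin 2 → ℕ → ℝ} (hv : Admissible v) (T : ℕ)
    (x : Fin 2 → ℕ) {m : ℕ} (hmt : m + 1 ≤ supply T x) {θ : ℝ} (hθ0 : 0 ≤ θ) (hθ1 : θ ≤ 1) :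
    ∑ j ∈ Icc 1 m, val v 0 j x + θ * val v 0 (m + 1) x
      - (m + θ) * val v 1 (supply T x - m) x ≤ gu T v 0 x := by
  set t := supply T x
  set S := ∑ j ∈ Icc 1 m, val v 0 j x
  set p := val v 1 (t - m) x
  have hother : other 0 = 1 := rfl
  have hm : S - m * p ≤ gu T v 0 x := by
    have hprice : val v 1 (t - m + 1) x ≤ p := hv.antitone 1 (by omega)
    refine le_trans ?_ (gbar_le_gu T v 0 x (by omega : m ≤ t))
    rw [gbar, hother]
    nlinarith [(Nat.cast_nonneg m : (0 : ℝ) ≤ m)]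
  have hm1 : S + val v 0 (m + 1) x - (m + 1) * p ≤ gu T v 0 x := by
    refine le_of_eq_of_le ?_ (gbar_le_gu T v 0 x hmt)
    rw [gbar, hother, sum_Icc_succ_top (Nat.le_add_left 1 m), Nat.cast_add_one,
      show t - (m + 1) + 1 = t - m by omega]
  nlinarith [mul_le_mul_of_nonneg_left hm (by linarith : (0 : ℝ) ≤ 1 - θ),
    mul_le_mul_of_nonneg_left hm1 hθ0]

theorem stmt16_general (T : ℕ) (v : Fin 2 → ℕ → ℝ) (hv : Admissible v)
    (x : Fin 2 → ℕ)
    (k : ℝ) (hk0 : 0 < k) (hk1 : k ≤ (supply T x : ℝ)) :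
    (∫ τ in (0:ℝ)..k, rv1 v x τ) - k * rv2 v x ((supply T x : ℝ) - k)
      ≤ gu T v 0 x := by
  obtain ⟨m, hm⟩ : ∃ m, ⌈k⌉₊ = m + 1 := Nat.exists_eq_add_one.2 (Nat.ceil_pos.2 hk0)
  have hmk : (m : ℝ) < k := Nat.lt_ceil.1 (by omega)
  have hkm : k ≤ m + 1 := by exact_mod_cast hm ▸ Nat.le_ceil k
  have hmt : m + 1 ≤ supply T x := hm ▸ Nat.ceil_le.2 hk1
  rw [integral_rv1_of_lt_of_le hv x hmk hkm, rv2_sub_of_lt_of_le v x hmt hmk hkm]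
  convert interpolated_payoff_le_gu hv T x hmt (sub_nonneg.2 hmk.le) (by linarith) using 2
  ring

/-- A strict monopsonist's greedy utility dominates the payoff of any fractional
greedy strategy. -/
theorem stmt16 (T : ℕ) (v : Fin 2 → ℕ → ℝ) (hv : Admissible v)
    (x : Fin 2 → ℕ) (hx : IsDecision T x)
    (hmono : df T v 0 x = supply T x)
    (k : ℝ) (hk0 : 0 < k) (hk1 : k ≤ (supply T x : ℝ)) :
    (∫ τ in (0:ℝ)..k, rv1 v x τ) - k * rv2 v x ((supply T x : ℝ) - k)
      ≤ gu T v 0 x :=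
  stmt16_general T v hv x k hk0 hk1
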